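/- Let C ⊆ (ZMod 3)^c be a linear ternary code with C ⊆ C⊥, and let χ = √3·(1,1,…,1) ∈ ℝ^c. Then χ ∈ Λ(C) and χ is a characteristic vector of Λ(C): for every λ ∈ Λ(C), both ⟨χ, λ⟩ and ⟨λ, λ⟩ are integers and ⟨χ, λ⟩ ≡ ⟨λ, λ⟩ (mod 2). -/

import Mathlib

open scoped BigOperators

noncomputable section

/-- The standard Euclidean inner product on `ℝ^c`. -/
def inn {c : ℕ} (x y : Fin c → ℝ) : ℝ := ∑ i, x i * y i

/-- The dual of a ternary code `C ⊆ (ZMod 3)^c`. -/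
def dualCode {c : ℕ} (C : Submodule (ZMod 3) (Fin c → ZMod 3)) : Set (Fin c → ZMod 3) :=
  {w | ∀ v ∈ C, ∑ i, w i * v i = 0}

/-- The 3-framed lattice `Λ(C)` associated to a ternary code `C`:
all vectors `(1/√3)·u` with `u ∈ ℤ^c` whose mod-3 reduction lies in `C`. -/
def latticeOf {c : ℕ} (C : Submodule (ZMod 3) (Fin c → ZMod 3)) : Set (Fin c → ℝ) :=
  {x | ∃ u : Fin c → ℤ, (fun i => ((u i : ZMod 3))) ∈ C ∧
    x = fun i => (u i : ℝ) / Real.sqrt 3}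

/-- The vector `χ = √3·(1,1,…,1) ∈ ℝ^c`. -/
def theChi (c : ℕ) : Fin c → ℝ := fun _ => Real.sqrt 3

/-! The reduction of `u ∈ ℤ^c` lies in a self-orthogonal code, so `3 ∣ ∑ uᵢ²`; writing
`λ = u/√3` we get `⟨χ, λ⟩ = ∑ uᵢ` and `⟨λ, λ⟩ = (∑ uᵢ²)/3`. Since `x² ≡ x` and `3 ≡ 1` mod 2,
`∑ uᵢ ≡ ∑ uᵢ² = 3·⟨λ, λ⟩ ≡ ⟨λ, λ⟩` mod 2. -/

theorem Int.mul_self_modEq_two (x : ℤ) : x * x ≡ x [ZMOD 2] :=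
  (Int.modEq_iff_dvd.2 (by simpa [mul_sub] using (Int.even_mul_pred_self x).two_dvd)).symm

theorem Int.sum_modEq_sum_mul_self_two {ι : Type*} (s : Finset ι) (u : ι → ℤ) :
    ∑ i ∈ s, u i ≡ ∑ i ∈ s, u i * u i [ZMOD 2] :=
  Int.ModEq.sum fun i _ => (Int.mul_self_modEq_two (u i)).symm

theorem three_dvd_sum_mul_self_of_mem_dualCode {c : ℕ} {C : Submodule (ZMod 3) (Fin c → ZMod 3)}
    {u : Fin c → ℤ} (hu : (fun i => (u i : ZMod 3)) ∈ dualCode C)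
    (hu' : (fun i => (u i : ZMod 3)) ∈ C) : (3 : ℤ) ∣ ∑ i, u i * u i := by
  refine (ZMod.intCast_zmod_eq_zero_iff_dvd _ 3).1 ?_
  push_cast
  exact hu _ hu'

theorem theChi_eq (c : ℕ) : theChi c = fun _ => ((3 : ℤ) : ℝ) / Real.sqrt 3 := by
  funext
  rw [theChi, Int.cast_ofNat, Real.div_sqrt]

theorem inn_theChi_div_sqrt_three {c : ℕ} (u : Fin c → ℤ) :
    inn (theChi c) (fun i => (u i : ℝ) / Real.sqrt 3) = ((∑ i, u i : ℤ) : ℝ) := by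
  have h3 : Real.sqrt 3 ≠ 0 := by positivity
  simp only [inn, theChi, Int.cast_sum]
  exact Finset.sum_congr rfl fun i _ => by field_simp

theorem inn_div_sqrt_three {c : ℕ} (u v : Fin c → ℤ) :
    inn (fun i => (u i : ℝ) / Real.sqrt 3) (fun i => (v i : ℝ) / Real.sqrt 3)
      = ((∑ i, u i * v i : ℤ) : ℝ) / 3 := by
  simp only [inn, div_mul_div_comm, Real.mul_self_sqrt (by norm_num : (0 : ℝ) ≤ 3),
    ← Finset.sum_div, Int.cast_sum, Int.cast_mul]

theorem chi_characteristic {c : ℕ}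
    (C : Submodule (ZMod 3) (Fin c → ZMod 3)) (hC : (C : Set (Fin c → ZMod 3)) ⊆ dualCode C) :
    theChi c ∈ latticeOf C ∧
      ∀ l ∈ latticeOf C, ∃ a b : ℤ,
        inn (theChi c) l = (a : ℝ) ∧ inn l l = (b : ℝ) ∧ a ≡ b [ZMOD 2] := by
  refine ⟨⟨fun _ => 3, ?_, theChi_eq c⟩, ?_⟩
  · convert C.zero_mem
    exact ZMod.natCast_self 3
  · rintro l ⟨u, hu, rfl⟩
    obtain ⟨b, hb⟩ := three_dvd_sum_mul_self_of_mem_dualCode (hC hu) hu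
    refine ⟨∑ i, u i, b, inn_theChi_div_sqrt_three u, ?_, ?_⟩
    · rw [inn_div_sqrt_three, hb]
      push_cast
      ring
    · calc ∑ i, u i ≡ ∑ i, u i * u i [ZMOD 2] := Int.sum_modEq_sum_mul_self_two _ u
        _ = 3 * b := hb
        _ ≡ 1 * b [ZMOD 2] := Int.ModEq.mul_right b (by decide)
        _ = b := one_mul b
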